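/- arXiv:2601.16765 — 4 statements merged into one kernel-verified Lean document; each statement's English description precedes it below -/
import Mathlib

section
/- Let n ≥ 4 and let Δ_n ⊆ R be the ideal generated by the 2×2 minors of the 2×n matrix whose first row is (x_1, x_2, …, x_n) and whose second row is (x_n, x_1, x_2, …, x_{n−1}). Then for every integer i ≥ 1 the degree-i homogeneous component of R/Δ_n has ℂ-dimension n; equivalently, dim_ℂ(Δ_n ∩ R_i) = C(n+i−1, n−1) − n for every i ≥ 1. -/
open MvPolynomial

noncomputable section

/-- `R n = ℂ[x_1, …, x_n]`. -/
abbrev R (n : ℕ) : Type := MvPolynomial (Fin n) ℂ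

/-- `R_d`, the ℂ-subspace of homogeneous polynomials of degree `d`. -/
def Rdeg (n d : ℕ) : Submodule ℂ (R n) := homogeneousSubmodule (Fin n) ℂ d

/-- The cyclic predecessor on `Fin n`: `prev c` is `c - 1 mod n`
(so that, with `x_{i+1} = X i`, the second row `(x_n, x_1, …, x_{n-1})` of the
matrix has entry `X (prev c)` in column `c`). -/
def prev {n : ℕ} (c : Fin n) : Fin n := ⟨(c.val + (n - 1)) % n, Nat.mod_lt _ c.pos⟩

/-- `Δ_n`: the ideal generated by the 2×2 minors of the 2×n matrix with rows
`(x_1, x_2, …, x_n)` and `(x_n, x_1, …, x_{n-1})`. -/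
def Delta (n : ℕ) : Ideal (R n) :=
  Ideal.span { f : R n | ∃ c d : Fin n, f = X c * X (prev d) - X d * X (prev c) }

/-!
Index the variables by `c ∈ ℤ/n`. Modulo `Δ_n` one has `x_{a+1} x_{b-1} = x_a x_b`, hence
`x_a x_b = x_{a+b} x_0`, so a monomial of degree `d + 1` is congruent to `x_0^d x_w`, where `w` is
the sum of its indices mod `n`: the image of `R_{d+1}` in `R/Δ_n` is spanned by these `n` classes.
They are linearly independent because `Δ_n` vanishes at the `n` points `(ζ^{kc})_c`,
`ζ = e^{2πi/n}`, where they evaluate to the invertible Vandermonde matrix `(ζ^{kw})_{k,w}`.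
The dimension of `Δ_n ∩ R_i` then follows from rank–nullity and `dim R_i = C(n+i-1, i)`.
-/

open Module Submodule

theorem MvPolynomial.finrank_homogeneousSubmodule (σ K : Type*) [Fintype σ] [Field K] (d : ℕ) :
    finrank K (homogeneousSubmodule σ K d) = (Fintype.card σ + d - 1).choose d := by
  classical
  rw [homogeneousSubmodule_eq_finsupp_supported, ← restrictSupport,
    finrank_eq_nat_card_basis (basisRestrictSupport K {a : σ →₀ ℕ | a.degree = d}),
    ← Nat.card_eq_fintype_card, ← Sym.natCard_sym_eq_choose]
  exact Nat.card_congr (Sym.equivNatSum σ d).symm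

theorem finrank_quotient_comap_subtype_ker {K M N : Type*} [Field K] [AddCommGroup M] [Module K M]
    [AddCommGroup N] [Module K N] (f : M →ₗ[K] N) (P : Submodule K M) :
    finrank K (P ⧸ (LinearMap.ker f).comap P.subtype) = finrank K (P.map f) := by
  rw [← LinearMap.ker_domRestrict, ← LinearMap.range_domRestrict]
  exact (f.domRestrict P).quotKerEquivRange.finrank_eq

theorem finrank_ker_inf_add_finrank_map {K M N : Type*} [Field K] [AddCommGroup M] [Module K M]
    [AddCommGroup N] [Module K N] (f : M →ₗ[K] N) (P : Submodule K M) [FiniteDimensional K P] :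
    finrank K ↥(LinearMap.ker f ⊓ P) + finrank K (P.map f) = finrank K P := by
  have hker :
      finrank K ↥(LinearMap.ker f ⊓ P) = finrank K (LinearMap.ker (f.domRestrict P)) := by
    rw [LinearMap.ker_domRestrict, inf_comm, ← map_comap_subtype]
    exact (equivMapOfInjective _ P.injective_subtype _).finrank_eq.symm
  rw [hker, ← LinearMap.range_domRestrict, add_comm]
  exact (f.domRestrict P).finrank_range_add_finrank_ker

theorem Ideal.Quotient.ker_mkₐ_toLinearMap {K A : Type*} [CommRing K] [CommRing A] [Algebra K A]
    (I : Ideal A) : LinearMap.ker (Ideal.Quotient.mkₐ K I).toLinearMap = I.restrictScalars K := by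
  ext
  simp [Ideal.Quotient.eq_zero_iff_mem]

namespace Delta

open Fin.NatCast

variable {n : ℕ}

theorem aeval_pow_val_eq_zero_of_mem {A : Type*} [CommRing A] [Algebra ℂ A] {ω : A}
    (hω : ω ^ n = 1) {f : R n} (hf : f ∈ Delta n) :
    aeval (fun c : Fin n => ω ^ (c : ℕ)) f = 0 := by
  refine RingHom.mem_ker.mp ((Ideal.span_le (I := RingHom.ker _)).mpr ?_ hf)
  rintro _ ⟨c, d, rfl⟩
  have hprev (e : Fin n) : ω ^ (prev e : ℕ) = ω ^ ((e : ℕ) + (n - 1)) :=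
    (pow_eq_pow_mod _ hω).symm
  simp only [SetLike.mem_coe, RingHom.mem_ker, map_sub, map_mul, aeval_X, hprev, ← pow_add]
  ring_nf

variable [NeZero n]

theorem prev_eq_sub_one (c : Fin n) : prev c = c - 1 := by
  ext
  rw [Fin.sub_def, Fin.val_one']
  obtain h | h : n = 1 ∨ 2 ≤ n := by have := NeZero.pos n; omega
  · subst h; simp
  · simp [prev, Nat.mod_eq_of_lt (show 1 < n by omega), Nat.add_comm]

theorem mkₐ_X_add_one_mul_X_sub_one (a b : Fin n) :
    Ideal.Quotient.mkₐ ℂ (Delta n) (X (a + 1) * X (b - 1)) =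
      Ideal.Quotient.mkₐ ℂ (Delta n) (X a * X b) := by
  have h : X (a + 1) * X (prev b) - X b * X (prev (a + 1)) ∈ Delta n :=
    Ideal.subset_span ⟨a + 1, b, rfl⟩
  rw [prev_eq_sub_one, prev_eq_sub_one, add_sub_cancel_right] at h
  rw [Ideal.Quotient.mkₐ_eq_mk, Ideal.Quotient.eq]
  convert h using 1
  ring

theorem mkₐ_X_add_natCast_mul_X_sub_natCast (t : ℕ) (a b : Fin n) :
    Ideal.Quotient.mkₐ ℂ (Delta n) (X (a + t) * X (b - t)) =
      Ideal.Quotient.mkₐ ℂ (Delta n) (X a * X b) := by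
  induction t with
  | zero => simp
  | succ t ih => rw [Nat.cast_succ, ← add_assoc, ← sub_sub, mkₐ_X_add_one_mul_X_sub_one, ih]

theorem mkₐ_X_mul_mkₐ_X (a b : Fin n) :
    Ideal.Quotient.mkₐ ℂ (Delta n) (X a) * Ideal.Quotient.mkₐ ℂ (Delta n) (X b) =
      Ideal.Quotient.mkₐ ℂ (Delta n) (X (a + b)) *
        Ideal.Quotient.mkₐ ℂ (Delta n) (X 0) := by
  simpa using (mkₐ_X_add_natCast_mul_X_sub_natCast b a b).symm

theorem map_mkₐ_Rdeg_succ (d : ℕ) :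
    (Rdeg n (d + 1)).map (Ideal.Quotient.mkₐ ℂ (Delta n)).toLinearMap =
      span ℂ (Set.range fun w => Ideal.Quotient.mkₐ ℂ (Delta n) (X 0 ^ d * X w)) := by
  induction d with
  | zero =>
    simp [Rdeg, homogeneousSubmodule_one_eq_span_X, map_span, ← Set.range_comp, Function.comp_def]
  | succ d ih =>
    have hmul : Rdeg n (d + 1 + 1) = Rdeg n 1 * Rdeg n (d + 1) := by
      rw [Rdeg, Rdeg, Rdeg, ← homogeneousSubmodule_one_pow ℂ (d + 1 + 1),
        ← homogeneousSubmodule_one_pow ℂ (d + 1), pow_succ']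
    rw [hmul, Submodule.map_mul, ih, Rdeg, homogeneousSubmodule_one_eq_span_X, map_span,
      span_mul_span]
    apply le_antisymm
    · rw [span_le]
      rintro _ ⟨_, ⟨_, ⟨c, rfl⟩, rfl⟩, _, ⟨w, rfl⟩, rfl⟩
      refine subset_span ⟨c + w, ?_⟩
      simp only [AlgHom.toLinearMap_apply, map_mul, map_pow]
      rw [← mul_assoc, mul_comm _ (_ ^ d), mul_assoc, mkₐ_X_mul_mkₐ_X]
      ring
    · rw [span_le]
      rintro _ ⟨w, rfl⟩
      refine subset_span ⟨_, ⟨X 0, ⟨0, rfl⟩, rfl⟩, _, ⟨w, rfl⟩, ?_⟩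
      simp only [AlgHom.toLinearMap_apply, map_mul, map_pow]
      ring

theorem linearIndependent_mkₐ_X_zero_pow_mul_X (d : ℕ) :
    LinearIndependent ℂ fun w : Fin n => Ideal.Quotient.mkₐ ℂ (Delta n) (X 0 ^ d * X w) := by
  have hζ := Complex.isPrimitiveRoot_exp n (NeZero.ne n)
  set ζ := Complex.exp (2 * Real.pi * Complex.I / n)
  have hζk (k : Fin n) : (ζ ^ (k : ℕ)) ^ n = 1 := by
    rw [← pow_mul, mul_comm, pow_mul, hζ.pow_eq_one, one_pow]
  let ev : (R n ⧸ Delta n) →ₗ[ℂ] Fin n → ℂ := LinearMap.pi fun k =>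
    (Ideal.Quotient.liftₐ (Delta n) (aeval fun c : Fin n => (ζ ^ (k : ℕ)) ^ (c : ℕ))
      fun _ hf => aeval_pow_val_eq_zero_of_mem (hζk k) hf).toLinearMap
  have hV : IsUnit (Matrix.vandermonde fun k : Fin n => ζ ^ (k : ℕ)) :=
    (Matrix.isUnit_iff_isUnit_det _).2 (Matrix.det_vandermonde_ne_zero_iff.2
      fun k l h => Fin.ext (hζ.pow_inj k.isLt l.isLt h)).isUnit
  have hcols : ev ∘ (fun w => Ideal.Quotient.mkₐ ℂ (Delta n) (X 0 ^ d * X w)) =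
      (Matrix.vandermonde fun k : Fin n => ζ ^ (k : ℕ)).col := by
    ext w k
    simp [ev, Matrix.vandermonde]
  exact LinearIndependent.of_comp ev (hcols ▸ Matrix.linearIndependent_cols_of_isUnit hV)

theorem finrank_map_mkₐ_Rdeg_succ (d : ℕ) :
    finrank ℂ ((Rdeg n (d + 1)).map (Ideal.Quotient.mkₐ ℂ (Delta n)).toLinearMap) = n := by
  rw [map_mkₐ_Rdeg_succ, finrank_span_eq_card (linearIndependent_mkₐ_X_zero_pow_mul_X d),
    Fintype.card_fin]

end Delta

/-- For `n ≥ 4` and every `i ≥ 1`, the degree-`i` homogeneous component of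
`R/Δ_n` has ℂ-dimension `n`; equivalently `dim_ℂ (Δ_n ∩ R_i) = C(n+i−1, n−1) − n`. -/
theorem delta_hilbert_function (n : ℕ) (hn : 4 ≤ n) (i : ℕ) (hi : 1 ≤ i) :
    Module.finrank ℂ
      (↥(Rdeg n i) ⧸ Submodule.comap (Rdeg n i).subtype ((Delta n).restrictScalars ℂ)) = n ∧
    Module.finrank ℂ ↥((Delta n).restrictScalars ℂ ⊓ Rdeg n i)
      = Nat.choose (n + i - 1) (n - 1) - n := by
  have : NeZero n := ⟨by omega⟩
  obtain ⟨d, rfl⟩ : ∃ d, i = d + 1 := ⟨i - 1, by omega⟩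
  have : FiniteDimensional ℂ (Rdeg n (d + 1)) :=
    Module.Finite.iff_fg.mpr (homogeneousSubmodule_fg _ _ _)
  have hdim : finrank ℂ (Rdeg n (d + 1)) = (n + (d + 1) - 1).choose (n - 1) := by
    rw [Rdeg, finrank_homogeneousSubmodule, Fintype.card_fin]
    exact Nat.choose_symm_of_eq_add (by omega)
  rw [← Ideal.Quotient.ker_mkₐ_toLinearMap (K := ℂ)]
  refine ⟨by rw [finrank_quotient_comap_subtype_ker, Delta.finrank_map_mkₐ_Rdeg_succ], ?_⟩
  have hrank := finrank_ker_inf_add_finrank_map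
    (Ideal.Quotient.mkₐ ℂ (Delta n)).toLinearMap (Rdeg n (d + 1))
  rw [Delta.finrank_map_mkₐ_Rdeg_succ] at hrank
  omega

end
end

section
/- Let n ≥ 2 and k ≥ 1. Then the ℂ-vector space Hom_R(m^k, R/m^k) of R-module homomorphisms from m^k to R/m^k has dimension C(n+k−1, n−1) · C(n+k−2, n−1). -/
open MvPolynomial

noncomputable section

/-- `m = (x_1, …, x_n)`, the ideal generated by the variables. -/
def mId (n : ℕ) : Ideal (R n) := Ideal.span (Set.range MvPolynomial.X)

/-!
Write `k = m + 1` and let `φ : 𝔪^k → R/𝔪^k` be `R`-linear. For `|a| = m` we have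
`x_j φ(x^{a+e_i}) = φ(x^{a+e_i+e_j}) = x_i φ(x^{a+e_j})`; in each degree `d + 1 ≤ m` this is an
identity of polynomials `x_j g(a+e_i) = x_i g(a+e_j)` between the degree-`d` parts `g(α)` of
`φ(x^α)`. When `n ≥ 2`, trading a factor `x_i` for some `x_j` with `j ≠ i` shows that such relations
force `x^α ∣ g(α)`, so `g(α) = 0`. Hence `φ` takes values in `𝔪^m/𝔪^k`, which `𝔪` annihilates:
`φ` kills `𝔪^{k+1}` and is the same as the `ℂ`-linear map it induces from forms of degree `k` to
forms of degree `m`. Conversely every such linear map is `R`-linear, because `𝔪` acts by zero on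
`𝔪^k/𝔪^{k+1}` and on `𝔪^m/𝔪^k`. So `Hom_R(𝔪^k, R/𝔪^k) ≅ Hom_ℂ(H_k, H_m)`, where `H_d` is the
space of forms of degree `d` and `dim H_d = C(n+d-1, d)`.
-/

theorem Finsupp.degree_sub_single_add_one {σ : Type*} {α : σ →₀ ℕ} {i : σ} (hi : α i ≠ 0) :
    (α - Finsupp.single i 1).degree + 1 = α.degree := by
  conv_rhs => rw [← Finsupp.sub_add_single_one_cancel hi]
  rw [map_add, Finsupp.degree_single]

theorem Finsupp.exists_lt_of_degree_lt {σ : Type*} {α β : σ →₀ ℕ} (h : β.degree < α.degree) :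
    ∃ i, β i < α i := by
  by_contra! h'
  exact h.not_ge (Finsupp.degree_mono fun i => h' i)

theorem Submodule.mk_mem_map_mkQ_iff {A M : Type*} [Ring A] [AddCommGroup M] [Module A M]
    {p q : Submodule A M} (h : p ≤ q) {x : M} :
    Submodule.Quotient.mk x ∈ q.map p.mkQ ↔ x ∈ q := by
  change p.mkQ x ∈ _ ↔ _
  rw [← Submodule.mem_comap, Submodule.comap_map_mkQ, sup_eq_right.2 h]

theorem LinearMap.smul_map_eq_smul_map_of_mul_eq {A M : Type*} [CommSemiring A]
    [AddCommMonoid M] [Module A M] {I : Ideal A} (φ : I →ₗ[A] M) {x y : A} {a b : I}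
    (h : x * a = y * b) : x • φ a = y • φ b := by
  rw [← map_smul, ← map_smul]
  exact congrArg φ (Subtype.ext h)

namespace MvPolynomial

variable {σ K : Type*} [CommRing K]

local notation "𝔪" => idealOfVars σ K

theorem IsHomogeneous.mem_pow_idealOfVars {p : MvPolynomial σ K} {d : ℕ}
    (hp : p.IsHomogeneous d) : p ∈ 𝔪 ^ d :=
  (mem_pow_idealOfVars_iff d p).2 fun x hx =>
    (by rw [Finsupp.degree_eq_weight_one]; exact (hp (mem_support_iff.1 hx)).ge)

theorem sub_C_constantCoeff_mem_idealOfVars (r : MvPolynomial σ K) :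
    r - C (constantCoeff r) ∈ 𝔪 := by
  refine pow_one 𝔪 ▸ (mem_pow_idealOfVars_iff' 1 _).2 fun x hx => ?_
  rw [Nat.lt_one_iff, Finsupp.degree_eq_zero_iff] at hx
  simp [hx, constantCoeff_eq]

theorem homogeneousComponent_eq_zero_of_mem_pow {f : MvPolynomial σ K} {d k : ℕ}
    (hf : f ∈ 𝔪 ^ k) (hd : d < k) : homogeneousComponent d f = 0 := by
  ext β
  rw [coeff_homogeneousComponent, coeff_zero]
  split_ifs with h
  · exact (mem_pow_idealOfVars_iff' k f).1 hf β (h ▸ hd)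
  · rfl

theorem sub_homogeneousComponent_mem_pow_succ {f : MvPolynomial σ K} {d : ℕ}
    (hf : f ∈ 𝔪 ^ d) : f - homogeneousComponent d f ∈ 𝔪 ^ (d + 1) := by
  refine (mem_pow_idealOfVars_iff' _ _).2 fun β hβ => ?_
  rw [coeff_sub, coeff_homogeneousComponent]
  split_ifs with h
  · exact sub_self _
  · rw [sub_zero]
    exact (mem_pow_idealOfVars_iff' d f).1 hf β (by omega)

theorem homogeneousComponent_mul_of_mem_pow (r : MvPolynomial σ K) {f : MvPolynomial σ K}
    {d : ℕ} (hf : f ∈ 𝔪 ^ d) :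
    homogeneousComponent d (r * f) = C (constantCoeff r) * homogeneousComponent d f := by
  have hr : (r - C (constantCoeff r)) * f ∈ 𝔪 ^ (d + 1) :=
    pow_succ' 𝔪 d ▸ Ideal.mul_mem_mul (sub_C_constantCoeff_mem_idealOfVars r) hf
  rw [← homogeneousComponent_C_mul, ← sub_eq_zero, ← map_sub, ← sub_mul]
  exact homogeneousComponent_eq_zero_of_mem_pow hr d.lt_succ_self

theorem mk_mul_eq_mk_C_constantCoeff_mul (r : MvPolynomial σ K) {g : MvPolynomial σ K} {m : ℕ}
    (hg : g ∈ 𝔪 ^ m) :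
    (Submodule.Quotient.mk (r * g) : MvPolynomial σ K ⧸ 𝔪 ^ (m + 1)) =
      Submodule.Quotient.mk (C (constantCoeff r) * g) := by
  rw [Submodule.Quotient.eq, ← sub_mul, pow_succ']
  exact Ideal.mul_mem_mul (sub_C_constantCoeff_mem_idealOfVars r) hg

theorem homogeneousComponent_X_mul (i : σ) (f : MvPolynomial σ K) (d : ℕ) :
    homogeneousComponent (d + 1) (X i * f) = X i * homogeneousComponent d f := by
  classical
  ext β
  rw [coeff_homogeneousComponent, coeff_X_mul', coeff_X_mul', coeff_homogeneousComponent]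
  by_cases hi : i ∈ β.support
  · simp only [hi, if_true, ← Finsupp.degree_sub_single_add_one (Finsupp.mem_support_iff.1 hi),
      Nat.add_right_cancel_iff]
  · simp [hi]

section Exchange

variable {g : (σ →₀ ℕ) → MvPolynomial σ K} {m : ℕ}
  (hg : ∀ a : σ →₀ ℕ, a.degree = m → ∀ i j,
    X j * g (a + Finsupp.single i 1) = X i * g (a + Finsupp.single j 1))
include hg

theorem coeff_eq_ite_of_exchange {α : σ →₀ ℕ} (hα : α.degree = m + 1) {i j : σ} (hi : α i ≠ 0)
    (hji : j ≠ i) (β : σ →₀ ℕ) :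
    coeff β (g α) = if β i = 0 then 0 else
      coeff (β + Finsupp.single j 1 - Finsupp.single i 1)
        (g (α - Finsupp.single i 1 + Finsupp.single j 1)) := by
  classical
  have ha : (α - Finsupp.single i 1).degree = m := by
    have := Finsupp.degree_sub_single_add_one hi
    omega
  rw [← Finsupp.sub_add_single_one_cancel hi, ← coeff_X_mul _ j, hg _ ha,
    Finsupp.sub_add_single_one_cancel hi, coeff_X_mul', add_comm β]
  simp [hji.symm]

theorem coeff_eq_zero_of_exchange [Nontrivial σ] {α β : σ →₀ ℕ} (hα : α.degree = m + 1)
    {i : σ} (hi : β i < α i) : coeff β (g α) = 0 := by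
  obtain ⟨t, ht⟩ : ∃ t, β i = t := ⟨_, rfl⟩
  obtain ⟨j, hji⟩ := exists_ne i
  induction t generalizing α β with
  | zero => rw [coeff_eq_ite_of_exchange hg hα (by omega) hji, if_pos ht]
  | succ t ih =>
    rw [coeff_eq_ite_of_exchange hg hα (by omega) hji, if_neg (by omega)]
    refine ih ?_ ?_ ?_
    · have := Finsupp.degree_sub_single_add_one (i := i) (α := α) (by omega)
      rw [map_add, Finsupp.degree_single]
      omega
    · simp [hji.symm]; omega
    · simp [hji.symm]; omega

end Exchange

def quotHomogeneousComponent {d k : ℕ} (hd : d < k) :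
    (MvPolynomial σ K ⧸ 𝔪 ^ k) →ₗ[K] homogeneousSubmodule σ K d :=
  ((𝔪 ^ k).restrictScalars K).liftQ
      ((homogeneousComponent d).codRestrict _ (homogeneousComponent_mem d))
      (fun _ hf => Subtype.ext (homogeneousComponent_eq_zero_of_mem_pow hf hd)) ∘ₗ
    (Submodule.Quotient.restrictScalarsEquiv K (𝔪 ^ k)).symm.toLinearMap

@[simp]
theorem coe_quotHomogeneousComponent_mk {d k : ℕ} (hd : d < k) (f : MvPolynomial σ K) :
    (quotHomogeneousComponent hd (Submodule.Quotient.mk f) : MvPolynomial σ K) =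
      homogeneousComponent d f :=
  rfl

theorem coe_quotHomogeneousComponent_X_smul {d k : ℕ} (hd : d + 1 < k) (i : σ)
    (u : MvPolynomial σ K ⧸ 𝔪 ^ k) :
    (quotHomogeneousComponent hd ((X i : MvPolynomial σ K) • u) : MvPolynomial σ K) =
      X i * (quotHomogeneousComponent (d.lt_succ_self.trans hd) u : MvPolynomial σ K) := by
  obtain ⟨f, rfl⟩ := Submodule.Quotient.mk_surjective _ u
  rw [← Submodule.Quotient.mk_smul, smul_eq_mul, coe_quotHomogeneousComponent_mk,
    coe_quotHomogeneousComponent_mk, homogeneousComponent_X_mul]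

theorem mk_quotHomogeneousComponent {m : ℕ} {u : MvPolynomial σ K ⧸ 𝔪 ^ (m + 1)}
    (hu : u ∈ Submodule.map (𝔪 ^ (m + 1)).mkQ (𝔪 ^ m)) :
    Submodule.Quotient.mk (quotHomogeneousComponent m.lt_succ_self u : MvPolynomial σ K) = u := by
  obtain ⟨g, hg, rfl⟩ := hu
  rw [Submodule.mkQ_apply, coe_quotHomogeneousComponent_mk, eq_comm, Submodule.Quotient.eq]
  exact sub_homogeneousComponent_mem_pow_succ hg

section Hom

variable [Nontrivial σ] {m : ℕ}

theorem map_monomial_mem_map_mkQ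
    (φ : ↥(𝔪 ^ (m + 1)) →ₗ[MvPolynomial σ K] MvPolynomial σ K ⧸ 𝔪 ^ (m + 1))
    {α : σ →₀ ℕ} (hα : α.degree = m + 1) :
    φ ⟨monomial α 1, (isHomogeneous_monomial 1 hα).mem_pow_idealOfVars⟩ ∈
      Submodule.map (𝔪 ^ (m + 1)).mkQ (𝔪 ^ m) := by
  obtain ⟨f, hf⟩ := Submodule.Quotient.mk_surjective _ (φ ⟨monomial α 1, _⟩)
  rw [← hf, Submodule.mk_mem_map_mkQ_iff (Ideal.pow_le_pow_right m.le_succ),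
    mem_pow_idealOfVars_iff']
  intro β hβ
  have hd : β.degree + 1 < m + 1 := by omega
  -- `hg` holds because the relation `x_j φ(x^{a+e_i}) = x_i φ(x^{a+e_j})` survives in degree
  -- `|β| + 1 ≤ m`.
  let g : (σ →₀ ℕ) → MvPolynomial σ K := fun a => if h : a.degree = m + 1 then
    quotHomogeneousComponent (hβ.trans m.lt_succ_self)
      (φ ⟨monomial a 1, (isHomogeneous_monomial 1 h).mem_pow_idealOfVars⟩) else 0
  have hg : ∀ a : σ →₀ ℕ, a.degree = m → ∀ i j,
      X j * g (a + Finsupp.single i 1) = X i * g (a + Finsupp.single j 1) := by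
    intro a ha i j
    have hdeg : ∀ l, (a + Finsupp.single l 1).degree = m + 1 := by simp [ha]
    simp only [g, dif_pos (hdeg _), ← coe_quotHomogeneousComponent_X_smul hd]
    congr 2
    apply LinearMap.smul_map_eq_smul_map_of_mul_eq
    simp only [X, monomial_mul, one_mul, add_comm, add_left_comm]
  obtain ⟨i, hi⟩ := Finsupp.exists_lt_of_degree_lt (hβ.trans_le (by omega : m ≤ α.degree))
  calc coeff β f = coeff β (g α) := by
        simp only [g, dif_pos hα, ← hf, coe_quotHomogeneousComponent_mk,
          coeff_homogeneousComponent, if_true]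
    _ = 0 := coeff_eq_zero_of_exchange hg hα hi

theorem map_mem_map_mkQ
    (φ : ↥(𝔪 ^ (m + 1)) →ₗ[MvPolynomial σ K] MvPolynomial σ K ⧸ 𝔪 ^ (m + 1))
    (f : ↥(𝔪 ^ (m + 1))) : φ f ∈ Submodule.map (𝔪 ^ (m + 1)).mkQ (𝔪 ^ m) := by
  suffices h : 𝔪 ^ (m + 1) ≤
      ((Submodule.map (𝔪 ^ (m + 1)).mkQ (𝔪 ^ m)).comap φ).map (𝔪 ^ (m + 1)).subtype by
    obtain ⟨f', hf', hf'f⟩ := h f.2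
    rwa [← Subtype.ext hf'f]
  conv_lhs => rw [pow_idealOfVars_eq_span]
  rw [Ideal.span_le]
  rintro _ ⟨α, hα, rfl⟩
  exact ⟨_, map_monomial_mem_map_mkQ φ hα, rfl⟩

theorem map_eq_zero_of_mem_pow_succ
    (φ : ↥(𝔪 ^ (m + 1)) →ₗ[MvPolynomial σ K] MvPolynomial σ K ⧸ 𝔪 ^ (m + 1))
    {f : ↥(𝔪 ^ (m + 1))} (hf : (f : MvPolynomial σ K) ∈ 𝔪 ^ (m + 1 + 1)) : φ f = 0 := by
  suffices h : 𝔪 ^ (m + 1 + 1) ≤ (LinearMap.ker φ).map (𝔪 ^ (m + 1)).subtype by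
    obtain ⟨f', hf', hf'f⟩ := h hf
    rwa [← Subtype.ext hf'f]
  rw [pow_succ' _ (m + 1), Ideal.mul_le]
  intro a ha b hb
  refine ⟨a • ⟨b, hb⟩, ?_, rfl⟩
  obtain ⟨g, hg, hgb⟩ := map_mem_map_mkQ φ ⟨b, hb⟩
  rw [SetLike.mem_coe, LinearMap.mem_ker, map_smul, ← hgb, Submodule.mkQ_apply,
    ← Submodule.Quotient.mk_smul, Submodule.Quotient.mk_eq_zero, smul_eq_mul, pow_succ']
  exact Ideal.mul_mem_mul ha hg

end Hom

variable (σ K) in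
def homogeneousPart (m : ℕ) :
    (↥(𝔪 ^ (m + 1)) →ₗ[MvPolynomial σ K] MvPolynomial σ K ⧸ 𝔪 ^ (m + 1)) →ₗ[K]
      homogeneousSubmodule σ K (m + 1) →ₗ[K] homogeneousSubmodule σ K m :=
  LinearMap.mk₂ K (fun φ p => quotHomogeneousComponent m.lt_succ_self
      (φ ⟨p, IsHomogeneous.mem_pow_idealOfVars p.2⟩))
    (fun _ _ _ => map_add _ _ _) (fun _ _ _ => by rw [LinearMap.smul_apply, map_smul])
    (fun φ _ _ => by rw [← map_add, ← map_add]; rfl)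
    (fun c φ _ => by rw [← map_smul, ← LinearMap.map_smul_of_tower]; rfl)

def ofHomogeneousPart {m : ℕ}
    (ψ : homogeneousSubmodule σ K (m + 1) →ₗ[K] homogeneousSubmodule σ K m) :
    ↥(𝔪 ^ (m + 1)) →ₗ[MvPolynomial σ K] MvPolynomial σ K ⧸ 𝔪 ^ (m + 1) where
  toFun f := Submodule.Quotient.mk
    (ψ ⟨homogeneousComponent (m + 1) f, homogeneousComponent_mem _ _⟩ : MvPolynomial σ K)
  map_add' f g := by
    have h : (⟨homogeneousComponent (m + 1) (f + g : ↥(𝔪 ^ (m + 1))),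
        homogeneousComponent_mem _ _⟩ : homogeneousSubmodule σ K (m + 1)) =
          ⟨homogeneousComponent (m + 1) f, homogeneousComponent_mem _ _⟩ +
            ⟨homogeneousComponent (m + 1) g, homogeneousComponent_mem _ _⟩ :=
      Subtype.ext (map_add _ _ _)
    rw [h, map_add, Submodule.coe_add, Submodule.Quotient.mk_add]
  map_smul' r f := by
    have h : (⟨homogeneousComponent (m + 1) (r • f : ↥(𝔪 ^ (m + 1))),
        homogeneousComponent_mem _ _⟩ : homogeneousSubmodule σ K (m + 1)) =
          constantCoeff r • ⟨homogeneousComponent (m + 1) f, homogeneousComponent_mem _ _⟩ :=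
      Subtype.ext (by simp [homogeneousComponent_mul_of_mem_pow r f.2, smul_eq_C_mul])
    rw [h, map_smul, RingHom.id_apply, ← Submodule.Quotient.mk_smul, smul_eq_mul,
      mk_mul_eq_mk_C_constantCoeff_mul r (IsHomogeneous.mem_pow_idealOfVars (ψ _).2),
      Submodule.coe_smul, smul_eq_C_mul]

variable (σ K) in
def homPowIdealOfVarsEquiv [Nontrivial σ] (m : ℕ) :
    (↥(𝔪 ^ (m + 1)) →ₗ[MvPolynomial σ K] MvPolynomial σ K ⧸ 𝔪 ^ (m + 1)) ≃ₗ[K]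
      (homogeneousSubmodule σ K (m + 1) →ₗ[K] homogeneousSubmodule σ K m) where
  __ := homogeneousPart σ K m
  invFun := ofHomogeneousPart
  left_inv φ := LinearMap.ext fun f => by
    have h : φ ⟨homogeneousComponent (m + 1) f,
        (homogeneousComponent_isHomogeneous _ _).mem_pow_idealOfVars⟩ = φ f := by
      rw [← sub_eq_zero, ← map_sub]
      refine map_eq_zero_of_mem_pow_succ φ ?_
      rw [Submodule.coe_sub, ← neg_sub]
      exact neg_mem (sub_homogeneousComponent_mem_pow_succ f.2)
    change Submodule.Quotient.mk
      (quotHomogeneousComponent m.lt_succ_self (φ ⟨_, _⟩) : MvPolynomial σ K) = φ f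
    rw [h]
    exact mk_quotHomogeneousComponent (map_mem_map_mkQ φ f)
  right_inv ψ := LinearMap.ext fun p => Subtype.ext <| by
    change homogeneousComponent m (ψ ⟨homogeneousComponent (m + 1) p, _⟩ : MvPolynomial σ K) =
      ψ p
    rw [homogeneousComponent_eq_self (ψ _).2]
    simp only [homogeneousComponent_eq_self p.2]

variable (σ K) in
def basisHomogeneousSubmodule (d : ℕ) :
    Module.Basis {x : σ →₀ ℕ | x.degree = d} K (homogeneousSubmodule σ K d) :=
  (basisRestrictSupport K _).map
    (LinearEquiv.ofEq _ _ (homogeneousSubmodule_eq_finsupp_supported σ K d).symm)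

instance (d : ℕ) : Module.Free K (homogeneousSubmodule σ K d) :=
  .of_basis (basisHomogeneousSubmodule σ K d)

instance [Finite σ] (d : ℕ) : Module.Finite K (homogeneousSubmodule σ K d) :=
  Module.Finite.iff_fg.2 (homogeneousSubmodule_fg σ K d)

theorem finrank_homogeneousSubmodule_s8 [Fintype σ] [Nontrivial K] (d : ℕ) :
    Module.finrank K (homogeneousSubmodule σ K d) = (Fintype.card σ + d - 1).choose d := by
  classical
  have h : {x : σ →₀ ℕ | x.degree = d} =
      ((Finset.univ : Finset σ).finsuppAntidiag d : Set (σ →₀ ℕ)) := by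
    ext x
    simp [Finset.mem_finsuppAntidiag, Finsupp.degree_eq_sum]
  rw [Module.finrank_eq_nat_card_basis (basisHomogeneousSubmodule σ K d), h, Nat.card_coe_set_eq,
    Set.ncard_coe_finset, Finset.card_finsuppAntidiag_nat_eq_choose, Finset.card_univ]

end MvPolynomial

/-- For `n ≥ 2` and `k ≥ 1`, the ℂ-vector space `Hom_R(m^k, R/m^k)`
of `R`-module homomorphisms has dimension `C(n+k−1, n−1) · C(n+k−2, n−1)`. -/
theorem dim_hom_power_of_maximal_ideal (n k : ℕ) (hn : 2 ≤ n) (hk : 1 ≤ k) :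
    Module.finrank ℂ (↥(mId n ^ k) →ₗ[R n] (R n ⧸ mId n ^ k)) =
      Nat.choose (n + k - 1) (n - 1) * Nat.choose (n + k - 2) (n - 1) := by
  obtain ⟨m, rfl⟩ := Nat.exists_eq_add_of_le' hk
  have : Nontrivial (Fin n) := Fin.nontrivial_iff_two_le.mpr hn
  rw [show mId n = idealOfVars (Fin n) ℂ from rfl, (homPowIdealOfVarsEquiv (Fin n) ℂ m).finrank_eq,
    Module.finrank_linearMap, finrank_homogeneousSubmodule_s8, finrank_homogeneousSubmodule_s8,
    Fintype.card_fin, Nat.choose_symm_of_eq_add (by omega : n + (m + 1) - 1 = m + 1 + (n - 1)),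
    show n + (m + 1) - 2 = n + m - 1 by omega,
    Nat.choose_symm_of_eq_add (by omega : n + m - 1 = m + (n - 1))]

end
end

section
/- Let (I^{(1)},…,I^{(r)}) be a nesting of m-primary ideals of R contained in m that has trivial negative tangents (TNT). Suppose there exist 1 ≤ j ≤ r and k ≥ 1 with I^{(j)} ⊋ m^k ⊋ I^{(j+1)}, where by convention I^{(r+1)} = 0. Let p = (I^{(1)},…,I^{(j)}, m^k, I^{(j+1)},…,I^{(r)}) be the (r+1)-nesting obtained by inserting m^k after position j. Then there is a ℂ-linear isomorphism T^{<0}(p) ≅ T^{<0}(I^{(1)},…,I^{(r)}) ⊕ Hom_R(m^k/I^{(j+1)}, I^{(j)}/m^k). -/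
open MvPolynomial

noncomputable section
set_option synthInstance.maxHeartbeats 1000000
set_option maxHeartbeats 1000000

open Classical in
/-- The canonical projection `R/p → R/q` (for `p ≤ q`); defined as `0` if `p ≰ q`. -/
def proj {n : ℕ} (p q : Ideal (R n)) : (R n ⧸ p) →ₗ[R n] (R n ⧸ q) :=
  if h : p ≤ q then Submodule.mapQ p q LinearMap.id (fun _ hx => h hx) else 0

/-- The ambient space of candidate tangent tuples for an `r`-nesting. -/
abbrev TanCar (n r : ℕ) (I : Fin r → Ideal (R n)) : Type :=
  Π i : Fin r, ↥(I i) →ₗ[R n] (R n ⧸ I i)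

/-- The tangent space `T(I^{(1)}, …, I^{(r)})`: tuples `(φ_1, …, φ_r)` with
`φ_i ∈ Hom_R(I^{(i)}, R/I^{(i)})` such that for consecutive indices and
`f ∈ I^{(i+1)}`, `φ_i(f)` is the image of `φ_{i+1}(f)` under `R/I^{(i+1)} → R/I^{(i)}`. -/
def nestT {n r : ℕ} (I : Fin r → Ideal (R n)) : Submodule ℂ (TanCar n r I) where
  carrier := { φ | ∀ (i j : Fin r), (j : ℕ) = (i : ℕ) + 1 →
      ∀ (f : R n) (hfi : f ∈ I i) (hfj : f ∈ I j),
        φ i ⟨f, hfi⟩ = proj (I j) (I i) (φ j ⟨f, hfj⟩) }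
  add_mem' := by
    intro a b ha hb i j hij f hfi hfj
    simp only [Pi.add_apply, LinearMap.add_apply, map_add,
      ha i j hij f hfi hfj, hb i j hij f hfi hfj]
  zero_mem' := by
    intro i j hij f hfi hfj
    simp
  smul_mem' := by
    intro c a ha i j hij f hfi hfj
    simp only [Pi.smul_apply, LinearMap.smul_apply, LinearMap.map_smul_of_tower,
      ha i j hij f hfi hfj]

/-- The non-negative part `T^{≥0}`: tuples with `φ_i(I^{(i)} ∩ m^j) ⊆ (m^j + I^{(i)})/I^{(i)}`
for all `i` and all `j ≥ 0`. -/
def nestTnn {n r : ℕ} (I : Fin r → Ideal (R n)) : Submodule ℂ (TanCar n r I) where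
  carrier := { φ | ∀ (i : Fin r) (j : ℕ) (f : R n) (hfi : f ∈ I i), f ∈ mId n ^ j →
      φ i ⟨f, hfi⟩ ∈ Submodule.map (Ideal.Quotient.mkₐ ℂ (I i)).toLinearMap
        ((mId n ^ j).restrictScalars ℂ) }
  add_mem' := by
    intro a b ha hb i j f hfi hfm
    exact Submodule.add_mem _ (ha i j f hfi hfm) (hb i j f hfi hfm)
  zero_mem' := by
    intro i j f hfi hfm
    exact Submodule.zero_mem _
  smul_mem' := by
    intro c a ha i j f hfi hfm
    exact Submodule.smul_mem _ c (ha i j f hfi hfm)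

instance nestT.instAddCommGroup {n r : ℕ} (I : Fin r → Ideal (R n)) : AddCommGroup ↥(nestT I) :=
  @Submodule.addCommGroup ℂ (TanCar n r I) _ _ _ (nestT I)

/-- The negative tangent space `T^{<0} = T / T^{≥0}`. -/
abbrev nestTneg {n r : ℕ} (I : Fin r → Ideal (R n)) : Type :=
  ↥(nestT I) ⧸ Submodule.comap (nestT I).subtype (nestTnn I)

/-- The tangent vector `π ∘ ∂/∂x_l` restricted to `I`. -/
def derivT {n : ℕ} (I : Ideal (R n)) (l : Fin n) : ↥I →ₗ[R n] (R n ⧸ I) where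
  toFun f := Ideal.Quotient.mk I (pderiv l (f : R n))
  map_add' f g := by simp
  map_smul' r f := by
    obtain ⟨f, hf⟩ := f
    show Ideal.Quotient.mk _ (pderiv l (r • f)) = r • Ideal.Quotient.mk _ (pderiv l f)
    rw [smul_eq_mul, pderiv_mul, map_add, map_mul, Ideal.Quotient.eq_zero_iff_mem.2 hf,
      mul_zero, zero_add]
    show Submodule.Quotient.mk (r * pderiv l f) = r • Submodule.Quotient.mk (pderiv l f)
    rw [← Submodule.Quotient.mk_smul, smul_eq_mul]

/-- The ideal `I^{(j+1)}` following position `j` in an `r`-nesting, with the convention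
`I^{(r+1)} = 0`. -/
def Inext {n r : ℕ} (I : Fin r → Ideal (R n)) (j : Fin r) : Ideal (R n) :=
  if h : (j : ℕ) + 1 < r then I ⟨(j : ℕ) + 1, h⟩ else ⊥

/-!
Forgetting the inserted slot gives a map `T^{<0}(p) → T^{<0}(I)`. It is onto by TNT: a negative
class of `I` is represented by a constant-coefficient derivation `∑ c_l ∂/∂x_l`, which is tangent
to every nesting. Its kernel consists of the classes of tuples supported on the inserted slot. Such
a tuple is a map `m^k → R/m^k`; compatibility with the non-negative neighbouring slots forces it to
kill `I^{(j+1)}` and to land in `I^{(j)}/m^k`, because `m^k` dies in `R/m^k` and in `R/I^{(j)}`.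
Conversely no nonzero such tuple is non-negative, as `m^k` is zero in `R/m^k`. Over `ℂ` the
resulting short exact sequence splits.
-/

theorem Function.Exact.nonempty_linearEquiv_prod {R U V W : Type*} [Semiring R]
    [AddCommGroup U] [AddCommGroup V] [AddCommGroup W] [Module R U] [Module R V] [Module R W]
    [Module.Projective R W] {f : U →ₗ[R] V} {g : V →ₗ[R] W} (hfg : Function.Exact f g)
    (hf : Function.Injective f) (hg : Function.Surjective g) : Nonempty (V ≃ₗ[R] W × U) := by
  obtain ⟨l, hl⟩ := g.exists_rightInverse_of_surjective (LinearMap.range_eq_top.2 hg)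
  exact ⟨(hfg.splitSurjectiveEquiv hf ⟨l, hl⟩).1.trans (LinearEquiv.prodComm R U W)⟩

theorem LinearMap.exists_comp_eq_of_range_le {R M N P : Type*} [Semiring R]
    [AddCommMonoid M] [AddCommMonoid N] [AddCommMonoid P] [Module R M] [Module R N] [Module R P]
    {g : N →ₗ[R] P} (hg : Function.Injective g) {ψ : M →ₗ[R] P} (h : range ψ ≤ range g) :
    ∃ φ : M →ₗ[R] N, g ∘ₗ φ = ψ :=
  ⟨(LinearEquiv.ofInjective g hg).symm.toLinearMap ∘ₗ ψ.codRestrict _ fun x => h ⟨x, rfl⟩,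
    LinearMap.ext fun _ => LinearEquiv.ofInjective_symm_apply g (h := hg) _⟩

theorem Submodule.mapQ_subtype_injective {R M : Type*} [Ring R] [AddCommGroup M] [Module R M]
    (p q : Submodule R M) : Function.Injective (mapQ (q.comap p.subtype) q p.subtype le_rfl) := by
  rw [← LinearMap.ker_eq_bot, ker_mapQ, mkQ_map_self]

theorem Fin.succ_lt_succ_succAbove_iff {r : ℕ} {j i : Fin r} :
    j.succ < j.succ.succAbove i ↔ j < i := by
  rw [lt_succAbove_iff_le_castSucc, succ_le_castSucc_iff]

theorem Fin.succ_succAbove_lt_succ_iff {r : ℕ} {j i : Fin r} :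
    j.succ.succAbove i < j.succ ↔ i ≤ j := by
  rw [succAbove_lt_iff_castSucc_lt, castSucc_lt_succ_iff]

theorem Fin.antitone_insertNth_succ {α : Type*} [Preorder α] {r : ℕ} {f : Fin r → α}
    (hf : Antitone f) {j : Fin r} {x : α} (hxj : x ≤ f j) (hjx : ∀ i, j < i → f i ≤ x) :
    Antitone (Fin.insertNth j.succ x f) := by
  intro a b hab
  rcases eq_self_or_eq_succAbove j.succ a with rfl | ⟨a, rfl⟩ <;>
    rcases eq_self_or_eq_succAbove j.succ b with rfl | ⟨b, rfl⟩
  · exact le_rfl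
  · have hjb := succ_lt_succ_succAbove_iff.1 (lt_of_le_of_ne hab (succAbove_ne _ _).symm)
    simpa using hjx b hjb
  · have haj := succ_succAbove_lt_succ_iff.1 (lt_of_le_of_ne hab (succAbove_ne _ _))
    simpa using hxj.trans (hf haj)
  · simpa using hf (succAbove_le_succAbove_iff.1 hab)

variable {n r s : ℕ}

theorem proj_mk {p q : Ideal (R n)} (h : p ≤ q) (a : R n) :
    proj p q (Ideal.Quotient.mk p a) = Ideal.Quotient.mk q a := by
  rw [proj, dif_pos h]
  rfl

theorem proj_self {p : Ideal (R n)} (x : R n ⧸ p) : proj p p x = x := by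
  obtain ⟨a, rfl⟩ := Ideal.Quotient.mk_surjective x
  exact proj_mk le_rfl a

theorem proj_proj {p q t : Ideal (R n)} (hpq : p ≤ q) (hqt : q ≤ t) (x : R n ⧸ p) :
    proj q t (proj p q x) = proj p t x := by
  obtain ⟨a, rfl⟩ := Ideal.Quotient.mk_surjective x
  rw [proj_mk hpq, proj_mk hqt, proj_mk (hpq.trans hqt)]

theorem eq_zero_of_mem_map {a q : Ideal (R n)} (haq : a ≤ q) {x : R n ⧸ q}
    (hx : x ∈ Submodule.map (Ideal.Quotient.mkₐ ℂ q).toLinearMap (a.restrictScalars ℂ)) :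
    x = 0 := by
  obtain ⟨b, hb, rfl⟩ := hx
  exact Ideal.Quotient.eq_zero_iff_mem.2 (haq hb)

theorem proj_eq_zero_of_mem_map {a p q : Ideal (R n)} (hpq : p ≤ q) (haq : a ≤ q) {x : R n ⧸ p}
    (hx : x ∈ Submodule.map (Ideal.Quotient.mkₐ ℂ p).toLinearMap (a.restrictScalars ℂ)) :
    proj p q x = 0 := by
  obtain ⟨b, hb, rfl⟩ := hx
  exact (proj_mk hpq b).trans (Ideal.Quotient.eq_zero_iff_mem.2 (haq hb))

theorem le_Inext {I : Fin r → Ideal (R n)} (hI : Antitone I) {i j : Fin r} (hji : j < i) :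
    I i ≤ Inext I j := by
  unfold Inext
  split_ifs with h
  · exact hI (Fin.le_def.2 (Fin.lt_def.1 hji))
  · exact absurd (Fin.lt_def.1 hji) (by omega)

theorem Inext_eq_bot_or_exists (I : Fin r → Ideal (R n)) (j : Fin r) :
    Inext I j = ⊥ ∨ ∃ i, j < i ∧ Inext I j = I i := by
  unfold Inext
  split_ifs with h
  · exact Or.inr ⟨⟨j + 1, h⟩, Fin.lt_def.2 (Nat.lt_succ_self _), rfl⟩
  · exact Or.inl rfl

theorem apply_eq_proj_of_mem_nestT {I : Fin r → Ideal (R n)} (hI : Antitone I)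
    {φ : TanCar n r I} (hφ : φ ∈ nestT I) {i i' : Fin r} (hii' : i ≤ i') {f : R n}
    (hi : f ∈ I i) (hi' : f ∈ I i') :
    φ i ⟨f, hi⟩ = proj (I i') (I i) (φ i' ⟨f, hi'⟩) := by
  obtain ⟨d, hd⟩ := Nat.exists_eq_add_of_le (Fin.le_def.1 hii')
  induction d generalizing i' with
  | zero =>
    obtain rfl : i = i' := Fin.ext hd.symm
    rw [proj_self]
  | succ d ih =>
    let i'' : Fin r := ⟨i + d, by omega⟩
    have hii'' : i ≤ i'' := Fin.le_def.2 (by simp [i''])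
    have hi''i' : i'' ≤ i' := Fin.le_def.2 (by simp [i'']; omega)
    rw [ih hii'' (hI hi''i' hi') rfl, hφ i'' i' (by simp [i'']; omega) f (hI hi''i' hi') hi',
      proj_proj (hI hi''i') (hI hii'')]

def derivTuple (I : Fin r → Ideal (R n)) (c : Fin n → ℂ) : TanCar n r I :=
  fun i => ∑ l, c l • derivT (I i) l

theorem derivTuple_mem_nestT {I : Fin r → Ideal (R n)} (hI : Antitone I) (c : Fin n → ℂ) :
    derivTuple I c ∈ nestT I := by
  intro i i' h f hi hi'
  simp only [derivTuple, LinearMap.sum_apply, LinearMap.smul_apply, map_sum,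
    LinearMap.map_smul_of_tower]
  refine Finset.sum_congr rfl fun l _ => congrArg (c l • ·) ?_
  exact (proj_mk (hI (Fin.le_def.2 (by omega))) _).symm

def HasTrivialNegTangents (I : Fin r → Ideal (R n)) : Prop :=
  ∀ t : nestTneg I, ∃ (c : Fin n → ℂ) (hmem : derivTuple I c ∈ nestT I),
    Submodule.Quotient.mk (⟨_, hmem⟩ : ↥(nestT I)) = t

section Restriction

variable {J : Fin s → Ideal (R n)} {σ : Fin r → Fin s}

variable (J σ) in
def TanCar.restrict : TanCar n s J →ₗ[ℂ] TanCar n r fun i => J (σ i) :=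
  LinearMap.pi fun i => LinearMap.proj (σ i)

theorem TanCar.restrict_mem_nestT (hJ : Antitone J) (hσ : Monotone σ) {φ : TanCar n s J}
    (hφ : φ ∈ nestT J) : TanCar.restrict J σ φ ∈ nestT fun i => J (σ i) :=
  fun _ _ h _ _ _ => apply_eq_proj_of_mem_nestT hJ hφ (hσ (Fin.le_def.2 (by omega))) _ _

theorem TanCar.restrict_mem_nestTnn {φ : TanCar n s J} (hφ : φ ∈ nestTnn J) :
    TanCar.restrict J σ φ ∈ nestTnn fun i => J (σ i) :=
  fun i => hφ (σ i)

def nestTneg.restrict (hJ : Antitone J) (hσ : Monotone σ) :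
    nestTneg J →ₗ[ℂ] nestTneg fun i => J (σ i) :=
  Submodule.mapQ _ _ ((TanCar.restrict J σ).restrict fun _ => TanCar.restrict_mem_nestT hJ hσ)
    fun _ => TanCar.restrict_mem_nestTnn

theorem nestTneg.restrict_surjective (hJ : Antitone J) (hσ : Monotone σ)
    (hTNT : HasTrivialNegTangents fun i => J (σ i)) :
    Function.Surjective (nestTneg.restrict hJ hσ) := by
  intro t
  obtain ⟨c, -, rfl⟩ := hTNT t
  exact ⟨Submodule.Quotient.mk ⟨derivTuple J c, derivTuple_mem_nestT hJ c⟩, rfl⟩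

end Restriction

/-- `Hom_R(K/N, P/K)`, with `K/N` meaning `K/(K ∩ N)` and `P/K` meaning `P/(P ∩ K)`. -/
abbrev SandwichHom (N K P : Ideal (R n)) : Type :=
  (↥K ⧸ Submodule.comap K.subtype N) →ₗ[R n] (↥P ⧸ Submodule.comap P.subtype K)

abbrev quotInclusion (K P : Ideal (R n)) : (↥P ⧸ Submodule.comap P.subtype K) →ₗ[R n] R n ⧸ K :=
  Submodule.mapQ _ K P.subtype le_rfl

section Sandwich

variable {J : Fin s → Ideal (R n)} {p : Fin s} {N P : Ideal (R n)}

variable (J p N P) in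
def sandwichTuple : SandwichHom N (J p) P →ₗ[ℂ] TanCar n s J :=
  LinearMap.single ℂ (fun i => ↥(J i) →ₗ[R n] R n ⧸ J i) p ∘ₗ
    ((LinearMap.llcomp (R n) _ _ _ (quotInclusion (J p) P) ∘ₗ
      LinearMap.lcomp (R n) _ (Submodule.mkQ _)).restrictScalars ℂ)

theorem sandwichTuple_apply_self (h : SandwichHom N (J p) P) :
    sandwichTuple J p N P h p = quotInclusion (J p) P ∘ₗ h ∘ₗ Submodule.mkQ _ :=
  Pi.single_eq_same _ _

theorem sandwichTuple_apply_of_ne (h : SandwichHom N (J p) P) {i : Fin s} (hi : i ≠ p) :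
    sandwichTuple J p N P h i = 0 :=
  Pi.single_eq_of_ne hi _

theorem sandwichTuple_mem_nestT (hJ : Antitone J) (hP : ∀ i < p, P ≤ J i)
    (hN : ∀ i, p < i → J i ≤ N) (h : SandwichHom N (J p) P) :
    sandwichTuple J p N P h ∈ nestT J := by
  intro i i' hii' f hi hi'
  have hlt : i < i' := Fin.lt_def.2 (by omega)
  by_cases hip : i = p
  · subst hip
    have hf : (Submodule.Quotient.mk ⟨f, hi⟩ : ↥(J i) ⧸ Submodule.comap (J i).subtype N) = 0 :=
      (Submodule.Quotient.mk_eq_zero _).2 (hN i' hlt hi')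
    rw [sandwichTuple_apply_of_ne h hlt.ne', sandwichTuple_apply_self, LinearMap.comp_apply,
      LinearMap.comp_apply, Submodule.mkQ_apply, hf, map_zero, map_zero, LinearMap.zero_apply,
      map_zero]
  · rw [sandwichTuple_apply_of_ne h hip, LinearMap.zero_apply]
    by_cases hi'p : i' = p
    · subst hi'p
      obtain ⟨⟨a, ha⟩, hx⟩ :=
        Submodule.Quotient.mk_surjective _ (h (Submodule.Quotient.mk ⟨f, hi'⟩))
      rw [sandwichTuple_apply_self, LinearMap.comp_apply, LinearMap.comp_apply,
        Submodule.mkQ_apply, ← hx, Submodule.mapQ_apply]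
      exact ((proj_mk (hJ hlt.le) a).trans (Ideal.Quotient.eq_zero_iff_mem.2 (hP i hlt ha))).symm
    · rw [sandwichTuple_apply_of_ne h hi'p, LinearMap.zero_apply, map_zero]

theorem eq_zero_of_sandwichTuple_mem_nestTnn {k : ℕ} (hp : J p = mId n ^ k)
    {h : SandwichHom N (J p) P} (hh : sandwichTuple J p N P h ∈ nestTnn J) : h = 0 := by
  refine Submodule.linearMap_qext _ (LinearMap.ext fun ⟨f, hf⟩ =>
    Submodule.mapQ_subtype_injective P (J p) ?_)
  have := eq_zero_of_mem_map hp.ge (hh p k f hf (hp ▸ hf))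
  rwa [sandwichTuple_apply_self] at this

end Sandwich

section Insertion

variable {J : Fin (r + 1) → Ideal (R n)}

theorem TanCar.restrict_sandwichTuple {p : Fin (r + 1)} {N P : Ideal (R n)}
    (h : SandwichHom N (J p) P) : TanCar.restrict J p.succAbove (sandwichTuple J p N P h) = 0 :=
  funext fun i => sandwichTuple_apply_of_ne h (Fin.succAbove_ne p i)

variable (J) in
def sandwichNeg (hJ : Antitone J) (j : Fin r) :
    SandwichHom (Inext (fun i => J (j.succ.succAbove i)) j) (J j.succ) (J (j.succ.succAbove j))
      →ₗ[ℂ] nestTneg J :=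
  Submodule.mkQ _ ∘ₗ (sandwichTuple J j.succ _ _).codRestrict (nestT J)
    (sandwichTuple_mem_nestT hJ
      (fun i hi => by rw [Fin.succAbove_succ_self]; exact hJ (Fin.le_castSucc_iff.2 hi))
      (fun i hi => by
        obtain ⟨i, rfl⟩ := Fin.exists_succAbove_eq hi.ne'
        exact le_Inext (hJ.comp_monotone (Fin.strictMono_succAbove _).monotone)
          (Fin.succ_lt_succ_succAbove_iff.1 hi)))

theorem sandwichNeg_injective (hJ : Antitone J) (j : Fin r) {k : ℕ}
    (hp : J j.succ = mId n ^ k) : Function.Injective (sandwichNeg J hJ j) := by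
  rw [← LinearMap.ker_eq_bot, LinearMap.ker_eq_bot']
  exact fun h hh =>
    eq_zero_of_sandwichTuple_mem_nestTnn hp ((Submodule.Quotient.mk_eq_zero _).1 hh)

theorem exists_sandwichTuple_apply_self_eq (hJ : Antitone J) (j : Fin r) {k : ℕ}
    (hp : J j.succ = mId n ^ k) {Φ : TanCar n (r + 1) J} (hΦ : Φ ∈ nestT J)
    (hΦ' : TanCar.restrict J j.succ.succAbove Φ ∈ nestTnn fun i => J (j.succ.succAbove i)) :
    ∃ h, sandwichTuple J j.succ (Inext (fun i => J (j.succ.succAbove i)) j)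
      (J (j.succ.succAbove j)) h j.succ = Φ j.succ := by
  have hker : Submodule.comap (J j.succ).subtype (Inext (fun i => J (j.succ.succAbove i)) j) ≤
      LinearMap.ker (Φ j.succ) := by
    rintro ⟨f, hf⟩ hfN
    rw [LinearMap.mem_ker]
    rcases Inext_eq_bot_or_exists (fun i => J (j.succ.succAbove i)) j with hN | ⟨i, hji, hN⟩
    · obtain rfl : f = 0 := by simpa [hN] using hfN
      exact map_zero (Φ j.succ)
    · have hfi : f ∈ J (j.succ.succAbove i) := hN ▸ hfN
      have hle : j.succ ≤ j.succ.succAbove i := (Fin.succ_lt_succ_succAbove_iff.2 hji).le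
      rw [apply_eq_proj_of_mem_nestT hJ hΦ hle hf hfi]
      exact proj_eq_zero_of_mem_map (hJ hle) hp.ge (hΦ' i k f hfi (hp ▸ hf))
  have hrange : LinearMap.range (Submodule.liftQ _ (Φ j.succ) hker) ≤
      LinearMap.range (quotInclusion (J j.succ) (J (j.succ.succAbove j))) := by
    rintro _ ⟨x, rfl⟩
    obtain ⟨⟨f, hf⟩, rfl⟩ := Submodule.Quotient.mk_surjective _ x
    obtain ⟨a, ha⟩ := Ideal.Quotient.mk_surjective (Φ j.succ ⟨f, hf⟩)
    have hlt : j.succ.succAbove j < j.succ := Fin.succ_succAbove_lt_succ_iff.2 le_rfl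
    have hfj : f ∈ J (j.succ.succAbove j) := hJ hlt.le hf
    have haP : a ∈ J (j.succ.succAbove j) := by
      have h0 := apply_eq_proj_of_mem_nestT hJ hΦ hlt.le hfj hf
      rw [← ha, proj_mk (hJ hlt.le)] at h0
      rw [← Ideal.Quotient.eq_zero_iff_mem, ← h0]
      exact eq_zero_of_mem_map (hp ▸ hJ hlt.le) (hΦ' j k f hfj (hp ▸ hf))
    exact ⟨Submodule.Quotient.mk ⟨a, haP⟩, ha⟩
  obtain ⟨h, hh⟩ :=
    LinearMap.exists_comp_eq_of_range_le (Submodule.mapQ_subtype_injective _ _) hrange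
  refine ⟨h, ?_⟩
  rw [sandwichTuple_apply_self, ← LinearMap.comp_assoc, hh, Submodule.liftQ_mkQ]

theorem exact_sandwichNeg_restrict (hJ : Antitone J) (j : Fin r) {k : ℕ}
    (hp : J j.succ = mId n ^ k) :
    Function.Exact (sandwichNeg J hJ j)
      (nestTneg.restrict hJ (Fin.strictMono_succAbove j.succ).monotone) := by
  refine LinearMap.exact_of_comp_eq_zero_of_ker_le_range ?_ fun x hx => ?_
  · ext h
    refine (Submodule.Quotient.mk_eq_zero _).2 ?_
    show TanCar.restrict J j.succ.succAbove (sandwichTuple J j.succ _ _ h) ∈ nestTnn _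
    rw [TanCar.restrict_sandwichTuple]
    exact zero_mem _
  obtain ⟨⟨Φ, hΦ⟩, rfl⟩ := Submodule.Quotient.mk_surjective _ x
  have hΦ' := (Submodule.Quotient.mk_eq_zero _).1 hx
  obtain ⟨h, hh⟩ := exists_sandwichTuple_apply_self_eq hJ j hp hΦ hΦ'
  refine ⟨h, (Submodule.Quotient.eq _).2 ?_⟩
  intro i d f hf hfd
  show sandwichTuple J j.succ _ _ h i ⟨f, hf⟩ - Φ i ⟨f, hf⟩ ∈ _
  rcases Fin.eq_self_or_eq_succAbove j.succ i with rfl | ⟨i, rfl⟩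
  · rw [hh, sub_self]
    exact zero_mem _
  · rw [sandwichTuple_apply_of_ne _ (Fin.succAbove_ne _ _), LinearMap.zero_apply, zero_sub]
    exact neg_mem (hΦ' i d f hf hfd)

theorem nonempty_nestTneg_equiv_prod_sandwichHom (hJ : Antitone J) (j : Fin r) {k : ℕ}
    (hp : J j.succ = mId n ^ k) (hTNT : HasTrivialNegTangents fun i => J (j.succ.succAbove i)) :
    Nonempty (nestTneg J ≃ₗ[ℂ] nestTneg (fun i => J (j.succ.succAbove i)) ×
      SandwichHom (Inext (fun i => J (j.succ.succAbove i)) j) (J j.succ)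
        (J (j.succ.succAbove j))) :=
  (exact_sandwichNeg_restrict hJ j hp).nonempty_linearEquiv_prod (sandwichNeg_injective hJ j hp)
    (nestTneg.restrict_surjective hJ _ hTNT)

end Insertion

theorem negative_tangents_of_sandwich_general (n r k : ℕ)
    (I : Fin r → Ideal (R n))
    (hnest : ∀ i i' : Fin r, i ≤ i' → I i' ≤ I i)
    (j : Fin r)
    (hjk : mId n ^ k < I j)
    (hkj : Inext I j < mId n ^ k)
    (hTNT : ∀ t : nestTneg I, ∃ (c : Fin n → ℂ)
      (hmem : (fun i => ∑ l : Fin n, c l • derivT (I i) l) ∈ nestT I),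
      Submodule.Quotient.mk (⟨_, hmem⟩ : ↥(nestT I)) = t) :
    Nonempty (nestTneg (Fin.insertNth j.succ (mId n ^ k) I) ≃ₗ[ℂ]
      (nestTneg I ×
        ((↥(mId n ^ k) ⧸ Submodule.comap (mId n ^ k).subtype (Inext I j)) →ₗ[R n]
          (↥(I j) ⧸ Submodule.comap (I j).subtype (mId n ^ k))))) := by
  set J := Fin.insertNth (α := fun _ => Ideal (R n)) j.succ (mId n ^ k) I
  have hJ : Antitone J :=
    Fin.antitone_insertNth_succ hnest hjk.le fun i hi => (le_Inext hnest hi).trans hkj.le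
  have hp : J j.succ = mId n ^ k := Fin.insertNth_apply_same _ _ _
  have hI : (fun i => J (j.succ.succAbove i)) = I := funext (Fin.insertNth_apply_succAbove _ _ _)
  clear_value J
  subst hI
  exact hp ▸ nonempty_nestTneg_equiv_prod_sandwichHom hJ j hp hTNT

/-- Let `(I^{(1)}, …, I^{(r)})` be a nesting of `m`-primary ideals of `R`
contained in `m` having trivial negative tangents (TNT).  Suppose `1 ≤ j ≤ r` and `k ≥ 1`
satisfy `I^{(j)} ⊋ m^k ⊋ I^{(j+1)}` (with `I^{(r+1)} = 0` by convention), and let `p` be the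
`(r+1)`-nesting obtained by inserting `m^k` after position `j`.  Then
`T^{<0}(p) ≅ T^{<0}(I^{(1)}, …, I^{(r)}) ⊕ Hom_R(m^k/I^{(j+1)}, I^{(j)}/m^k)` as ℂ-vector
spaces. -/
theorem negative_tangents_of_sandwich (n r k : ℕ) (hk : 1 ≤ k)
    (I : Fin r → Ideal (R n))
    (hnest : ∀ i i' : Fin r, i ≤ i' → I i' ≤ I i)
    (hprimary : ∀ i : Fin r, ∃ N : ℕ, 1 ≤ N ∧ mId n ^ N ≤ I i)
    (hinm : ∀ i : Fin r, I i ≤ mId n)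
    (j : Fin r)
    (hjk : mId n ^ k < I j)
    (hkj : Inext I j < mId n ^ k)
    (hTNT : ∀ t : nestTneg I, ∃ (c : Fin n → ℂ)
      (hmem : (fun i => ∑ l : Fin n, c l • derivT (I i) l) ∈ nestT I),
      Submodule.Quotient.mk (⟨_, hmem⟩ : ↥(nestT I)) = t) :
    Nonempty (nestTneg (Fin.insertNth j.succ (mId n ^ k) I) ≃ₗ[ℂ]
      (nestTneg I ×
        ((↥(mId n ^ k) ⧸ Submodule.comap (mId n ^ k).subtype (Inext I j)) →ₗ[R n]
          (↥(I j) ⧸ Submodule.comap (I j).subtype (mId n ^ k))))) :=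
  negative_tangents_of_sandwich_general n r k I hnest j hjk hkj hTNT

end
end

section
/- In R = ℂ[x_1,x_2,x_3,x_4], let I_S be the ideal generated by the 2×2 minors of the matrix with rows (x_1,x_2,x_3) and (x_2,x_3,x_4), i.e. I_S = (x_1x_3 − x_2², x_1x_4 − x_2x_3, x_2x_4 − x_3²), and let I_Z = (x_1,x_3)² + (x_2,x_4)² + (x_1x_4 − x_2x_3). Then I_S ⊆ I_Z and dim_ℂ R/I_Z = 8. -/
open MvPolynomial

noncomputable section

/-- `R = ℂ[x_1, x_2, x_3, x_4]`. -/
abbrev R4 : Type := MvPolynomial (Fin 4) ℂ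

/-- `I_S = (x₁x₃ − x₂², x₁x₄ − x₂x₃, x₂x₄ − x₃²)`, the ideal of the 2×2 minors of the
matrix with rows `(x₁, x₂, x₃)` and `(x₂, x₃, x₄)` (the cone over the twisted cubic). -/
def ISurf : Ideal R4 :=
  Ideal.span {X 0 * X 2 - X 1 ^ 2, X 0 * X 3 - X 1 * X 2, X 1 * X 3 - X 2 ^ 2}

/-- `I_Z = (x₁, x₃)² + (x₂, x₄)² + (x₁x₄ − x₂x₃)`. -/
def IZ : Ideal R4 :=
  (Ideal.span {X 0, X 2} : Ideal R4) ^ 2 ⊔ (Ideal.span {X 1, X 3} : Ideal R4) ^ 2 ⊔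
    Ideal.span {X 0 * X 3 - X 1 * X 2}

/-! ### Auxiliary material -/

/-- Exponent vectors as finitely supported functions. -/
private def fs (a : Fin 4 → ℕ) : Fin 4 →₀ ℕ := Finsupp.equivFunOnFinite.symm a

private lemma fs_apply (a : Fin 4 → ℕ) (i : Fin 4) : fs a i = a i := rfl

private lemma fs_eq_iff {a b : Fin 4 → ℕ} : fs a = fs b ↔ a = b :=
  Finsupp.equivFunOnFinite.symm.injective.eq_iff

private lemma fs_le_iff {a b : Fin 4 → ℕ} : fs a ≤ fs b ↔ ∀ i, a i ≤ b i :=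
  Finsupp.le_def

/-- The exponent matrices of the nine "target" monomials: the 8 basis monomials of the
quotient together with `x₁x₂` (index 8). -/
private def TM : Fin 9 → Fin 4 → ℕ :=
  ![![0,0,0,0], ![1,0,0,0], ![0,1,0,0], ![0,0,1,0], ![0,0,0,1],
    ![1,1,0,0], ![0,0,1,1], ![1,0,0,1], ![0,1,1,0]]

/-- The nine target exponent vectors. -/
private def T : Fin 9 → (Fin 4 →₀ ℕ) := fun k => fs (TM k)

/-- The 8 basis exponent vectors. -/
private def B8 : Fin 8 → (Fin 4 →₀ ℕ) := fun i => T i.castSucc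

private lemma fs_nonle_T {a : Fin 4 → ℕ} {k : Fin 9} (h : ∃ i, TM k i < a i) :
    ¬ fs a ≤ T k := by
  intro hle
  obtain ⟨i, hi⟩ := h
  have := fs_le_iff.mp hle i
  omega

private lemma ssfs (i j : Fin 4) (a : Fin 4 → ℕ)
    (h : ∀ k, (if i = k then 1 else 0) + (if j = k then 1 else 0) = a k) :
    (Finsupp.single i 1 + Finsupp.single j 1 : Fin 4 →₀ ℕ) = fs a := by
  ext k
  simp [fs_apply, Finsupp.single_apply, ← h k]

private lemma XX (i j : Fin 4) :
    (X i * X j : R4) = monomial (Finsupp.single i 1 + Finsupp.single j 1) 1 := by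
  rw [X, X, monomial_mul, one_mul]

private lemma X00 : (X 0 * X 0 : R4) = monomial (fs ![2,0,0,0]) 1 := by
  rw [XX, ssfs 0 0 ![2,0,0,0] (by decide)]
private lemma X02 : (X 0 * X 2 : R4) = monomial (fs ![1,0,1,0]) 1 := by
  rw [XX, ssfs 0 2 ![1,0,1,0] (by decide)]
private lemma X22 : (X 2 * X 2 : R4) = monomial (fs ![0,0,2,0]) 1 := by
  rw [XX, ssfs 2 2 ![0,0,2,0] (by decide)]
private lemma X11 : (X 1 * X 1 : R4) = monomial (fs ![0,2,0,0]) 1 := by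
  rw [XX, ssfs 1 1 ![0,2,0,0] (by decide)]
private lemma X13 : (X 1 * X 3 : R4) = monomial (fs ![0,1,0,1]) 1 := by
  rw [XX, ssfs 1 3 ![0,1,0,1] (by decide)]
private lemma X33 : (X 3 * X 3 : R4) = monomial (fs ![0,0,0,2]) 1 := by
  rw [XX, ssfs 3 3 ![0,0,0,2] (by decide)]
private lemma X03 : (X 0 * X 3 : R4) = monomial (T 7) 1 := by
  rw [XX, ssfs 0 3 (TM 7) (by decide)]; rfl
private lemma X12 : (X 1 * X 2 : R4) = monomial (T 8) 1 := by
  rw [XX, ssfs 1 2 (TM 8) (by decide)]; rfl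

/-- Components of the coefficient functional. -/
private def phiC : Fin 8 → (R4 →ₗ[ℂ] ℂ) :=
  ![lcoeff ℂ (T 0), lcoeff ℂ (T 1), lcoeff ℂ (T 2), lcoeff ℂ (T 3), lcoeff ℂ (T 4),
    lcoeff ℂ (T 5), lcoeff ℂ (T 6), lcoeff ℂ (T 7) + lcoeff ℂ (T 8)]

private def phi : R4 →ₗ[ℂ] (Fin 8 → ℂ) := LinearMap.pi phiC

private lemma phi_eq (p : R4) :
    phi p = ![coeff (T 0) p, coeff (T 1) p, coeff (T 2) p, coeff (T 3) p, coeff (T 4) p,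
      coeff (T 5) p, coeff (T 6) p, coeff (T 7) p + coeff (T 8) p] := by
  funext i
  fin_cases i <;> rfl

/-- `phi` kills `q * monomial s 1` whenever `s` is not below any target. -/
private lemma phi_mul_mono {s : Fin 4 →₀ ℕ} (hs : ∀ k : Fin 9, ¬ s ≤ T k) (q : R4) :
    phi (q * monomial s 1) = 0 := by
  rw [phi_eq]
  simp [coeff_mul_monomial', hs 0, hs 1, hs 2, hs 3, hs 4, hs 5, hs 6, hs 7, hs 8]

private lemma phi_mul_g7 (q : R4) : phi (q * (X 0 * X 3 - X 1 * X 2)) = 0 := by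
  have n7 : ∀ k : Fin 9, k ≠ 7 → ¬ T 7 ≤ T k := by
    intro k hk
    exact fs_nonle_T (by revert hk; fin_cases k <;> decide)
  have n8 : ∀ k : Fin 9, k ≠ 8 → ¬ T 8 ≤ T k := by
    intro k hk
    exact fs_nonle_T (by revert hk; fin_cases k <;> decide)
  have l7 : T 7 ≤ T 7 := le_rfl
  have l8 : T 8 ≤ T 8 := le_rfl
  have s77 : T 7 - T 7 = 0 := by simp
  have s88 : T 8 - T 8 = 0 := by simp
  rw [mul_sub, X03, X12, phi_eq]
  simp [coeff_sub, coeff_mul_monomial',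
    n7 0 (by decide), n7 1 (by decide), n7 2 (by decide), n7 3 (by decide),
    n7 4 (by decide), n7 5 (by decide), n7 6 (by decide), n7 8 (by decide),
    n8 0 (by decide), n8 1 (by decide), n8 2 (by decide), n8 3 (by decide),
    n8 4 (by decide), n8 5 (by decide), n8 6 (by decide), n8 7 (by decide),
    l7, l8, s77, s88]

private lemma mem_pair_sq {i j : Fin 4} {u v : R4}
    (hu : u ∈ Ideal.span {X i, X j}) (hv : v ∈ Ideal.span {X i, X j}) :
    u * v ∈ (Ideal.span {X i, X j} : Ideal R4) ^ 2 := by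
  rw [sq]; exact Ideal.mul_mem_mul hu hv

private lemma Xl_mem (i j : Fin 4) : (X i : R4) ∈ Ideal.span {X i, X j} :=
  Ideal.subset_span (by simp)

private lemma Xr_mem (i j : Fin 4) : (X j : R4) ∈ Ideal.span {X i, X j} :=
  Ideal.subset_span (by simp)

private lemma mem_IZ_02 {p : R4} (h : p ∈ (Ideal.span {X 0, X 2} : Ideal R4) ^ 2) :
    p ∈ IZ := by
  unfold IZ; exact Submodule.mem_sup_left (Submodule.mem_sup_left h)

private lemma mem_IZ_13 {p : R4} (h : p ∈ (Ideal.span {X 1, X 3} : Ideal R4) ^ 2) :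
    p ∈ IZ := by
  unfold IZ; exact Submodule.mem_sup_left (Submodule.mem_sup_right h)

private lemma mem_IZ_g {p : R4} (h : p ∈ (Ideal.span {X 0 * X 3 - X 1 * X 2} : Ideal R4)) :
    p ∈ IZ := by
  unfold IZ; exact Submodule.mem_sup_right h

/-- `phi` vanishes on `IZ`. -/
private lemma phi_vanish {p : R4} (hp : p ∈ IZ) : phi p = 0 := by
  have sq_case : ∀ (i j : Fin 4) (mii mij mjj : Fin 4 → ℕ),
      (X i * X i : R4) = monomial (fs mii) 1 →
      (X i * X j : R4) = monomial (fs mij) 1 →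
      (X j * X j : R4) = monomial (fs mjj) 1 →
      (∀ k : Fin 9, ¬ fs mii ≤ T k) →
      (∀ k : Fin 9, ¬ fs mij ≤ T k) →
      (∀ k : Fin 9, ¬ fs mjj ≤ T k) →
      ∀ r ∈ (Ideal.span {X i, X j} : Ideal R4) ^ 2, phi r = 0 := by
    intro i j mii mij mjj hii hij hjj nii nij njj r hr
    rw [sq] at hr
    refine Submodule.mul_induction_on hr ?_ ?_
    · intro m hm n hn
      rcases Ideal.mem_span_pair.mp hm with ⟨a, b, rfl⟩
      rcases Ideal.mem_span_pair.mp hn with ⟨c, d, rfl⟩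
      have expand : (a * X i + b * X j) * (c * X i + d * X j)
          = (a * c) * (X i * X i) + ((a * d + b * c) * (X i * X j)
            + (b * d) * (X j * X j)) := by ring
      rw [expand, hii, hij, hjj, map_add, map_add,
        phi_mul_mono nii, phi_mul_mono nij, phi_mul_mono njj]
      simp
    · intro x y hx hy
      rw [map_add, hx, hy, add_zero]
  rcases Submodule.mem_sup.mp hp with ⟨ab, hab, c, hc, rfl⟩
  rcases Submodule.mem_sup.mp hab with ⟨u, hu, w, hw, rfl⟩
  have h1 : phi u = 0 := by
    refine sq_case 0 2 ![2,0,0,0] ![1,0,1,0] ![0,0,2,0] X00 X02 X22 ?_ ?_ ?_ u hu <;>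
      · intro k
        exact fs_nonle_T (by fin_cases k <;> decide)
  have h2 : phi w = 0 := by
    refine sq_case 1 3 ![0,2,0,0] ![0,1,0,1] ![0,0,0,2] X11 X13 X33 ?_ ?_ ?_ w hw <;>
      · intro k
        exact fs_nonle_T (by fin_cases k <;> decide)
  have h3 : phi c = 0 := by
    rcases Ideal.mem_span_singleton.mp hc with ⟨q, rfl⟩
    rw [mul_comm]
    exact phi_mul_g7 q
  rw [map_add, map_add, h1, h2, h3, add_zero, add_zero]

/-- Monomial generators of `IZ`. -/
private lemma mono_mem_IZ :
    ∀ s ∈ ({fs ![2,0,0,0], fs ![1,0,1,0], fs ![0,0,2,0], fs ![0,2,0,0], fs ![0,1,0,1],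
      fs ![0,0,0,2]} : Set (Fin 4 →₀ ℕ)), (monomial s 1 : R4) ∈ IZ := by
  rintro s hs
  simp only [Set.mem_insert_iff, Set.mem_singleton_iff] at hs
  rcases hs with rfl | rfl | rfl | rfl | rfl | rfl
  · exact X00 ▸ mem_IZ_02 (mem_pair_sq (Xl_mem 0 2) (Xl_mem 0 2))
  · exact X02 ▸ mem_IZ_02 (mem_pair_sq (Xl_mem 0 2) (Xr_mem 0 2))
  · exact X22 ▸ mem_IZ_02 (mem_pair_sq (Xr_mem 0 2) (Xr_mem 0 2))
  · exact X11 ▸ mem_IZ_13 (mem_pair_sq (Xl_mem 1 3) (Xl_mem 1 3))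
  · exact X13 ▸ mem_IZ_13 (mem_pair_sq (Xl_mem 1 3) (Xr_mem 1 3))
  · exact X33 ▸ mem_IZ_13 (mem_pair_sq (Xr_mem 1 3) (Xr_mem 1 3))

private lemma monomial_mem_IZ_of_le {s v : Fin 4 →₀ ℕ} (h : s ≤ v)
    (hs : (monomial s 1 : R4) ∈ IZ) : (monomial v 1 : R4) ∈ IZ := by
  have hv : (monomial v (1:ℂ) : R4) = monomial (v - s) 1 * monomial s 1 := by
    rw [monomial_mul, one_mul, tsub_add_cancel_of_le h]
  rw [hv]
  exact Ideal.mul_mem_left _ _ hs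

private def f8 : Fin 8 → (R4 ⧸ IZ) := fun i => Ideal.Quotient.mk IZ (monomial (B8 i) 1)

/-- Every monomial lies in the span of the images of the eight basis monomials. -/
private lemma mono_mem_span (v : Fin 4 →₀ ℕ) :
    Ideal.Quotient.mk IZ (monomial v 1) ∈ Submodule.span ℂ (Set.range f8) := by
  have hzero : ∀ {w : Fin 4 →₀ ℕ}, (monomial w 1 : R4) ∈ IZ →
      Ideal.Quotient.mk IZ (monomial w 1) ∈ Submodule.span ℂ (Set.range f8) := by
    intro w hw
    rw [Ideal.Quotient.eq_zero_iff_mem.mpr hw]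
    exact Submodule.zero_mem _
  have hle : ∀ (a : Fin 4 → ℕ), a 0 ≤ v 0 → a 1 ≤ v 1 → a 2 ≤ v 2 → a 3 ≤ v 3 →
      fs a ≤ v := by
    intro a h0 h1 h2 h3
    rw [Finsupp.le_def]
    intro i
    fin_cases i
    exacts [h0, h1, h2, h3]
  by_cases c0 : 2 ≤ v 0
  · refine hzero (monomial_mem_IZ_of_le
      (hle ![2,0,0,0] (by simp <;> omega) (by simp <;> omega) (by simp <;> omega) (by simp <;> omega))
      (mono_mem_IZ _ (by simp)))
  by_cases c1 : 2 ≤ v 1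
  · refine hzero (monomial_mem_IZ_of_le
      (hle ![0,2,0,0] (by simp <;> omega) (by simp <;> omega) (by simp <;> omega) (by simp <;> omega))
      (mono_mem_IZ _ (by simp)))
  by_cases c2 : 2 ≤ v 2
  · refine hzero (monomial_mem_IZ_of_le
      (hle ![0,0,2,0] (by simp <;> omega) (by simp <;> omega) (by simp <;> omega) (by simp <;> omega))
      (mono_mem_IZ _ (by simp)))
  by_cases c3 : 2 ≤ v 3
  · refine hzero (monomial_mem_IZ_of_le
      (hle ![0,0,0,2] (by simp <;> omega) (by simp <;> omega) (by simp <;> omega) (by simp <;> omega))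
      (mono_mem_IZ _ (by simp)))
  by_cases c02 : 1 ≤ v 0 ∧ 1 ≤ v 2
  · refine hzero (monomial_mem_IZ_of_le
      (hle ![1,0,1,0] (by simp <;> omega) (by simp <;> omega) (by simp <;> omega) (by simp <;> omega))
      (mono_mem_IZ _ (by simp)))
  by_cases c13 : 1 ≤ v 1 ∧ 1 ≤ v 3
  · refine hzero (monomial_mem_IZ_of_le
      (hle ![0,1,0,1] (by simp <;> omega) (by simp <;> omega) (by simp <;> omega) (by simp <;> omega))
      (mono_mem_IZ _ (by simp)))
  -- now every exponent is 0 or 1 and the excluded patterns do not occur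
  have hv : v = fs ![v 0, v 1, v 2, v 3] := by
    ext i; fin_cases i <;> rfl
  have basis_mem : ∀ i : Fin 8, Ideal.Quotient.mk IZ (monomial (B8 i) 1)
      ∈ Submodule.span ℂ (Set.range f8) := fun i => Submodule.subset_span ⟨i, rfl⟩
  have e0 : v 0 = 0 ∨ v 0 = 1 := by omega
  have e1 : v 1 = 0 ∨ v 1 = 1 := by omega
  have e2 : v 2 = 0 ∨ v 2 = 1 := by omega
  have e3 : v 3 = 0 ∨ v 3 = 1 := by omega
  have hx12 : Ideal.Quotient.mk IZ (monomial (fs ![0,1,1,0]) (1:ℂ))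
      ∈ Submodule.span ℂ (Set.range f8) := by
    have heq : Ideal.Quotient.mk IZ (monomial (fs ![0,1,1,0]) (1:ℂ))
        = Ideal.Quotient.mk IZ (monomial (B8 7) 1) := by
      rw [Ideal.Quotient.eq]
      have : (monomial (fs ![0,1,1,0]) (1:ℂ) : R4) - monomial (B8 7) 1
          = -(X 0 * X 3 - X 1 * X 2) := by
        rw [X03, X12]
        have hB : B8 7 = T 7 := rfl
        have hT8 : T 8 = fs ![0,1,1,0] := rfl
        rw [hB, hT8]
        ring
      rw [this]
      exact neg_mem (mem_IZ_g (Ideal.subset_span rfl))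
    rw [heq]
    exact basis_mem 7
  rcases e0 with e0 | e0 <;> rcases e1 with e1 | e1 <;> rcases e2 with e2 | e2 <;>
      rcases e3 with e3 | e3 <;>
    rw [hv, e0, e1, e2, e3]
  · exact basis_mem 0
  · exact basis_mem 4
  · exact basis_mem 3
  · exact basis_mem 6
  · exact basis_mem 2
  · exact absurd ⟨by omega, by omega⟩ c13
  · exact hx12
  · exact absurd ⟨by omega, by omega⟩ c13
  · exact basis_mem 1
  · exact basis_mem 7
  · exact absurd ⟨by omega, by omega⟩ c02
  · exact absurd ⟨by omega, by omega⟩ c02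
  · exact basis_mem 5
  · exact absurd ⟨by omega, by omega⟩ c13
  · exact absurd ⟨by omega, by omega⟩ c02
  · exact absurd ⟨by omega, by omega⟩ c02

private lemma span_f8_top : Submodule.span ℂ (Set.range f8) = ⊤ := by
  rw [eq_top_iff]
  rintro q -
  obtain ⟨p, rfl⟩ := Ideal.Quotient.mk_surjective q
  rw [← Ideal.Quotient.mkₐ_eq_mk (R₁ := ℂ)]
  rw [p.as_sum, map_sum]
  refine Submodule.sum_mem _ fun w hw => ?_
  have : (monomial w (coeff w p) : R4) = coeff w p • monomial w 1 := by
    rw [smul_monomial, smul_eq_mul, mul_one]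
  rw [this, map_smul]
  exact Submodule.smul_mem _ _ (by
    rw [Ideal.Quotient.mkₐ_eq_mk]
    exact mono_mem_span w)

private lemma TM_inj : ∀ j k : Fin 9, TM j = TM k ↔ j = k := by decide

private lemma CMcond (i : Fin 8) (k : Fin 9) : B8 i = T k ↔ (i : ℕ) = (k : ℕ) := by
  have h1 : B8 i = T k ↔ TM i.castSucc = TM k := fs_eq_iff
  rw [h1, TM_inj, Fin.ext_iff, Fin.coe_castSucc]

private lemma CM (i : Fin 8) (k : Fin 9) :
    coeff (T k) (monomial (B8 i) (1:ℂ)) = if (i : ℕ) = (k : ℕ) then 1 else 0 := by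
  rw [coeff_monomial]
  exact if_congr (CMcond i k) rfl rfl

private lemma f8_indep : LinearIndependent ℂ f8 := by
  rw [Fintype.linearIndependent_iff]
  intro g hg
  have hmem : (∑ i, g i • monomial (B8 i) (1:ℂ) : R4) ∈ IZ := by
    rw [← Ideal.Quotient.eq_zero_iff_mem]
    calc Ideal.Quotient.mk IZ (∑ i, g i • monomial (B8 i) (1:ℂ))
        = ∑ i, g i • f8 i := by
          rw [← Ideal.Quotient.mkₐ_eq_mk (R₁ := ℂ), map_sum]
          simp_rw [map_smul]
          simp [f8, Ideal.Quotient.mkₐ_eq_mk]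
      _ = 0 := hg
  have h0 := phi_vanish hmem
  rw [phi_eq] at h0
  simp only [Fin.sum_univ_eight, coeff_add, coeff_smul, CM, smul_eq_mul, mul_ite, mul_one,
    mul_zero] at h0
  simp (config := { decide := true }) only [Matrix.cons_eq_zero_iff, if_true, if_false,
    add_zero, zero_add, Matrix.zero_empty, and_true] at h0
  obtain ⟨a0, a1, a2, a3, a4, a5, a6, a7⟩ := h0
  intro i
  fin_cases i <;> assumption

/-- `I_S ⊆ I_Z` and `dim_ℂ R/I_Z = 8`: the non-smoothable length-8
subscheme defined by `I_Z` lies on the singular surface defined by `I_S`. -/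
theorem twisted_cubic_cone_contains_length_eight :
    ISurf ≤ IZ ∧ Module.finrank ℂ (R4 ⧸ IZ) = 8 := by
  constructor
  · rw [ISurf]
    refine Ideal.span_le.mpr ?_
    rintro p hp
    simp only [Set.mem_insert_iff, Set.mem_singleton_iff] at hp
    rcases hp with rfl | rfl | rfl
    · refine sub_mem (mem_IZ_02 (mem_pair_sq (Xl_mem 0 2) (Xr_mem 0 2))) ?_
      rw [sq]
      exact mem_IZ_13 (mem_pair_sq (Xl_mem 1 3) (Xl_mem 1 3))
    · exact mem_IZ_g (Ideal.subset_span rfl)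
    · refine sub_mem (mem_IZ_13 (mem_pair_sq (Xl_mem 1 3) (Xr_mem 1 3))) ?_
      rw [sq]
      exact mem_IZ_02 (mem_pair_sq (Xr_mem 0 2) (Xr_mem 0 2))
  · have hfin : Module.Finite ℂ (R4 ⧸ IZ) :=
      ⟨by rw [← span_f8_top]; exact Submodule.fg_span (Set.finite_range _)⟩
    refine le_antisymm ?_ ?_
    · haveI := (Set.finite_range f8).fintype
      have h1 : Module.finrank ℂ (R4 ⧸ IZ)
          = Module.finrank ℂ (Submodule.span ℂ (Set.range f8)) := by
        rw [span_f8_top, finrank_top]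
      rw [h1]
      refine (finrank_span_le_card _).trans ?_
      classical
      calc (Set.range f8).toFinset.card ≤ Fintype.card (Fin 8) :=
            Set.toFinset_card (Set.range f8) ▸ Fintype.card_range_le f8
        _ = 8 := by simp
    · simpa using f8_indep.fintype_card_le_finrank

end
end
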